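/- In the ring R = k[x,y,z,u]/(x²+yz, xy−yu, xz, xu, y²), the ideal quotients ((z) : (x,z)) = (x,z,u) and ((x) : (x,y)) = (x,y,z,u) hold. -/

import Mathlib

open MvPolynomial

set_option synthInstance.maxHeartbeats 1000000
set_option maxHeartbeats 1000000

noncomputable section

/-- The defining ideal `(x²+yz, xy−yu, xz, xu, y²)` of Conca's ring, with
`x = X 0`, `y = X 1`, `z = X 2`, `u = X 3`. -/
def concaIdeal (k : Type*) [Field k] : Ideal (MvPolynomial (Fin 4) k) :=
  Ideal.span {X 0 ^ 2 + X 1 * X 2, X 0 * X 1 - X 1 * X 3, X 0 * X 2, X 0 * X 3, X 1 ^ 2}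

/-- The ring `R = k[x,y,z,u]/(x²+yz, xy−yu, xz, xu, y²)`. -/
abbrev ConcaRing (k : Type*) [Field k] := MvPolynomial (Fin 4) k ⧸ concaIdeal k

/-- The residue classes of the variables `x, y, z, u` in `R`. -/
def cv (k : Type*) [Field k] (i : Fin 4) : ConcaRing k :=
  Ideal.Quotient.mk (concaIdeal k) (X i)

/-!
The inclusions `⊇` are checked on generators with the defining relations. For `⊆`: modulo
`(x, z, u)` every element of `R` is `c + d y` with `c, d ∈ k`, and modulo `(x, y, z, u)` it is a
constant `c`. Since these ideals already lie in the respective colons, it suffices to show that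
`(c + d y) x ∈ (z)` forces `c = d = 0` and that `c y ∈ (x)` forces `c = 0`. Both are seen after
mapping `R` to `k[ε][ε] ≅ k[x, y]/(x², y²)` (`x, u ↦ ε`, `y ↦ ε'`, `z ↦ 0`), respectively to
`k[ε]` (`y ↦ ε`, all other variables to `0`).
-/

namespace ConcaRing

open DualNumber TrivSqZeroExt

variable {k : Type*} [Field k]

@[simp]
lemma mk_X (i : Fin 4) : Ideal.Quotient.mk (concaIdeal k) (X i) = cv k i := rfl

lemma mk_eq_zero_of_mem_generators {g : MvPolynomial (Fin 4) k}
    (hg : g ∈ ({X 0 ^ 2 + X 1 * X 2, X 0 * X 1 - X 1 * X 3, X 0 * X 2, X 0 * X 3, X 1 ^ 2} :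
      Set (MvPolynomial (Fin 4) k))) :
    Ideal.Quotient.mk (concaIdeal k) g = 0 :=
  Ideal.Quotient.eq_zero_iff_mem.2 (Ideal.subset_span hg)

section Relations

variable (k)

lemma cv_zero_sq_add : cv k 0 ^ 2 + cv k 1 * cv k 2 = 0 := by
  have := mk_eq_zero_of_mem_generators (k := k) (g := X 0 ^ 2 + X 1 * X 2) (by simp)
  rwa [map_add, map_pow, map_mul] at this

lemma cv_zero_mul_one : cv k 0 * cv k 1 = cv k 1 * cv k 3 := by
  have := mk_eq_zero_of_mem_generators (k := k) (g := X 0 * X 1 - X 1 * X 3) (by simp)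
  rwa [map_sub, map_mul, map_mul, sub_eq_zero] at this

lemma cv_zero_mul_three : cv k 0 * cv k 3 = 0 := by
  have := mk_eq_zero_of_mem_generators (k := k) (g := X 0 * X 3) (by simp)
  rwa [map_mul] at this

lemma cv_one_sq : cv k 1 ^ 2 = 0 := by
  have := mk_eq_zero_of_mem_generators (k := k) (g := X 1 ^ 2) (by simp)
  rwa [map_pow] at this

end Relations

lemma exists_sub_mem_span_cv_zero_two_three (r : ConcaRing k) :
    ∃ c d : k, r - (algebraMap k _ c + algebraMap k _ d * cv k 1) ∈
      Ideal.span {cv k 0, cv k 2, cv k 3} := by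
  obtain ⟨p, rfl⟩ := Ideal.Quotient.mk_surjective r
  induction p using MvPolynomial.induction_on with
  | C a => exact ⟨a, 0, by simp [← Ideal.Quotient.mk_algebraMap]⟩
  | add p q hp hq =>
    obtain ⟨c, d, hp⟩ := hp
    obtain ⟨c', d', hq⟩ := hq
    refine ⟨c + c', d + d', ?_⟩
    convert add_mem hp hq using 1
    simp only [map_add]
    ring
  | mul_X p i hp =>
    obtain ⟨c, d, hp⟩ := hp
    rw [map_mul, mk_X]
    by_cases hi : i = 1
    · subst hi
      refine ⟨0, c, ?_⟩
      have : Ideal.Quotient.mk _ p * cv k 1 - (algebraMap k _ 0 + algebraMap k _ c * cv k 1) =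
          (Ideal.Quotient.mk _ p - (algebraMap k _ c + algebraMap k _ d * cv k 1)) * cv k 1 +
            algebraMap k _ d * cv k 1 ^ 2 := by
        rw [map_zero]
        ring
      rw [this, cv_one_sq k, mul_zero, add_zero]
      exact Ideal.mul_mem_right _ _ hp
    · refine ⟨0, 0, ?_⟩
      have : cv k i ∈ Ideal.span {cv k 0, cv k 2, cv k 3} := by
        apply Ideal.subset_span
        fin_cases i <;> simp_all
      simpa using Ideal.mul_mem_left _ _ this

lemma exists_sub_algebraMap_mem_span_cv (r : ConcaRing k) :
    ∃ c : k, r - algebraMap k _ c ∈ Ideal.span {cv k 0, cv k 1, cv k 2, cv k 3} := by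
  obtain ⟨c, d, hr⟩ := exists_sub_mem_span_cv_zero_two_three r
  have hy : algebraMap k _ d * cv k 1 ∈ Ideal.span {cv k 0, cv k 1, cv k 2, cv k 3} :=
    Ideal.mul_mem_left _ _ (Ideal.subset_span (by simp))
  have hxzu : Ideal.span {cv k 0, cv k 2, cv k 3} ≤ Ideal.span {cv k 0, cv k 1, cv k 2, cv k 3} :=
    Ideal.span_mono (by simp [Set.insert_subset_iff])
  exact ⟨c, by simpa [sub_add_eq_sub_sub] using add_mem (hxzu hr) hy⟩

lemma span_cv_zero_two_three_le_colon :
    Ideal.span {cv k 0, cv k 2, cv k 3} ≤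
      (Ideal.span {cv k 2}).colon (Ideal.span {cv k 0, cv k 2}) := by
  simp only [Ideal.span_le, Set.insert_subset_iff, Set.singleton_subset_iff, SetLike.mem_coe,
    Ideal.colon_span, Submodule.mem_colon, Set.forall_mem_insert, Set.mem_singleton_iff,
    forall_eq, smul_eq_mul, Ideal.mem_span_singleton, dvd_mul_left, dvd_mul_right, true_and,
    and_true]
  exact ⟨⟨-cv k 1, by linear_combination cv_zero_sq_add k⟩,
    ⟨0, by linear_combination cv_zero_mul_three k⟩⟩

lemma span_cv_le_colon :
    Ideal.span {cv k 0, cv k 1, cv k 2, cv k 3} ≤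
      (Ideal.span {cv k 0}).colon (Ideal.span {cv k 0, cv k 1}) := by
  simp only [Ideal.span_le, Set.insert_subset_iff, Set.singleton_subset_iff, SetLike.mem_coe,
    Ideal.colon_span, Submodule.mem_colon, Set.forall_mem_insert, Set.mem_singleton_iff,
    forall_eq, smul_eq_mul, Ideal.mem_span_singleton, dvd_mul_left, dvd_mul_right, true_and,
    and_true]
  exact ⟨⟨0, by linear_combination cv_one_sq k⟩,
    ⟨-cv k 0, by linear_combination cv_zero_sq_add k⟩,
    ⟨cv k 1, by linear_combination -cv_zero_mul_one k⟩⟩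

def toDualNumber : ConcaRing k →ₐ[k] k[ε] :=
  Ideal.Quotient.liftₐ _ (aeval ![0, ε, 0, 0]) fun _ hg ↦ RingHom.mem_ker.1 <|
    (Ideal.span_le (I := RingHom.ker _)).2 (by simp [Set.insert_subset_iff]) hg

@[simp]
lemma toDualNumber_cv (i : Fin 4) : toDualNumber (cv k i) = ![0, ε, 0, 0] i :=
  aeval_X _ i

def toDualNumberDualNumber : ConcaRing k →ₐ[k] k[ε][ε] :=
  Ideal.Quotient.liftₐ _ (aeval (R := k) (S₁ := k[ε][ε]) ![ε, inl ε, 0, ε]) fun _ hg ↦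
    RingHom.mem_ker.1 <| (Ideal.span_le (I := RingHom.ker _)).2
      (by simp [Set.insert_subset_iff, sub_eq_zero]; ring) hg

@[simp]
lemma toDualNumberDualNumber_cv (i : Fin 4) :
    toDualNumberDualNumber (cv k i) = ![ε, inl ε, 0, ε] i :=
  aeval_X _ i

lemma eq_zero_of_algebraMap_mul_cv_one_mem {c : k}
    (h : algebraMap k (ConcaRing k) c * cv k 1 ∈ Ideal.span {cv k 0}) : c = 0 := by
  obtain ⟨a, ha⟩ := Ideal.mem_span_singleton'.1 h
  have := congrArg toDualNumber ha
  simpa [TrivSqZeroExt.ext_iff, algebraMap_eq_inl, eq_comm] using this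

lemma eq_zero_of_mul_cv_zero_mem {c d : k}
    (h : (algebraMap k (ConcaRing k) c + algebraMap k _ d * cv k 1) * cv k 0 ∈
      Ideal.span {cv k 2}) : c = 0 ∧ d = 0 := by
  obtain ⟨a, ha⟩ := Ideal.mem_span_singleton'.1 h
  have := congrArg toDualNumberDualNumber ha
  simpa [TrivSqZeroExt.ext_iff, algebraMap_eq_inl', algebraMap_eq_inl, eq_comm] using this

theorem colon_span_cv_two_eq :
    (Ideal.span {cv k 2}).colon (Ideal.span {cv k 0, cv k 2}) =
      Ideal.span {cv k 0, cv k 2, cv k 3} := by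
  refine le_antisymm (fun r hr ↦ ?_) span_cv_zero_two_three_le_colon
  obtain ⟨c, d, hj⟩ := exists_sub_mem_span_cv_zero_two_three r
  have hcd := sub_mem hr (span_cv_zero_two_three_le_colon hj)
  rw [sub_sub_cancel, Submodule.mem_colon] at hcd
  obtain ⟨rfl, rfl⟩ := eq_zero_of_mul_cv_zero_mem (hcd _ (Ideal.subset_span (by simp)))
  simpa using hj

theorem colon_span_cv_zero_eq :
    (Ideal.span {cv k 0}).colon (Ideal.span {cv k 0, cv k 1}) =
      Ideal.span {cv k 0, cv k 1, cv k 2, cv k 3} := by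
  refine le_antisymm (fun r hr ↦ ?_) span_cv_le_colon
  obtain ⟨c, hj⟩ := exists_sub_algebraMap_mem_span_cv r
  have hc := sub_mem hr (span_cv_le_colon hj)
  rw [sub_sub_cancel, Submodule.mem_colon] at hc
  obtain rfl := eq_zero_of_algebraMap_mul_cv_one_mem (hc _ (Ideal.subset_span (by simp)))
  simpa using hj

end ConcaRing

theorem stmt_3 (k : Type*) [Field k] :
    Submodule.colon (Ideal.span {cv k 2}) (Ideal.span {cv k 0, cv k 2}) =
      Ideal.span {cv k 0, cv k 2, cv k 3} ∧
    Submodule.colon (Ideal.span {cv k 0}) (Ideal.span {cv k 0, cv k 1}) =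
      Ideal.span {cv k 0, cv k 1, cv k 2, cv k 3} :=
  ⟨ConcaRing.colon_span_cv_two_eq, ConcaRing.colon_span_cv_zero_eq⟩
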